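/- arXiv:math/0506251 — 7 statements merged into one kernel-verified Lean document; each statement's English description precedes it below -/
import Mathlib

section
/- Let V and E be finite types ('vertices' and 'edges') with maps s, r : E → V ('source' and 'range'), and suppose V has exactly N elements. Let X = {x : ℕ → E | for all n, s(x(n+1)) = r(x(n))} be the path space of the directed graph (V, E, r, s). Suppose a subset B ⊆ X satisfies the rigidity condition: for all x, y ∈ B and all n ∈ ℕ, if r(x(n)) = r(y(n)) then x(n) = y(n). Then B has at most N elements. -/
/-- Lemma 3.3(1), abstract form: a subset of the path space of a finite directed
graph satisfying the rigidity condition has at most `N = |V|` elements. -/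
theorem stmt1 {V E : Type*} [Fintype V] [Fintype E] (s r : E → V) (N : ℕ)
    (hV : Fintype.card V = N)
    (B : Set (ℕ → E))
    (hBX : ∀ x ∈ B, ∀ n : ℕ, s (x (n + 1)) = r (x n))
    (rigid : ∀ x ∈ B, ∀ y ∈ B, ∀ n : ℕ, r (x n) = r (y n) → x n = y n) :
    B.Finite ∧ B.ncard ≤ N := by
  classical
  -- equality propagates downward along paths
  have down : ∀ x ∈ B, ∀ y ∈ B, ∀ n k : ℕ, x (n + k) = y (n + k) → x n = y n := by
    intro x hx y hy n k
    induction k with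
    | zero => exact fun h => h
    | succ k ih =>
      intro h
      apply ih
      apply rigid x hx y hy
      rw [← hBX x hx (n + k), ← hBX y hy (n + k)]
      rw [show n + k + 1 = n + (k + 1) from rfl, h]
  have key : ∀ S : Finset (ℕ → E), ↑S ⊆ B → S.card ≤ N := by
    intro S hS
    have hw : ∀ x ∈ S, ∀ y ∈ S, x ≠ y → ∃ n, ∀ m, n ≤ m → x m ≠ y m := by
      intro x hx y hy hxy
      obtain ⟨n, hn⟩ := Function.ne_iff.mp hxy
      refine ⟨n, fun m hm h => hn ?_⟩
      obtain ⟨k, rfl⟩ := Nat.exists_eq_add_of_le hm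
      exact down x (hS hx) y (hS hy) n k h
    choose! w hwspec using hw
    set n : ℕ := S.sup (fun x => S.sup (fun y => w x y)) with hn
    have hle : ∀ x ∈ S, ∀ y ∈ S, w x y ≤ n := by
      intro x hx y hy
      exact le_trans (Finset.le_sup (f := fun y => w x y) hy)
        (Finset.le_sup (f := fun x => S.sup (fun y => w x y)) hx)
    have inj : Set.InjOn (fun x : ℕ → E => r (x n)) ↑S := by
      intro x hx y hy h
      by_contra hxy
      have hxn : x n = y n := rigid x (hS hx) y (hS hy) n h
      exact hwspec x hx y hy hxy n (hle x hx y hy) hxn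
    calc S.card ≤ (Finset.univ : Finset V).card :=
          Finset.card_le_card_of_injOn _ (fun a _ => Finset.mem_univ _) inj
      _ = N := hV
  have hfin : B.Finite := by
    by_contra hinf
    obtain ⟨t, ht, htc⟩ := Set.Infinite.exists_subset_card_eq hinf (N + 1)
    have := key t ht
    omega
  refine ⟨hfin, ?_⟩
  have := key hfin.toFinset (by simp)
  rwa [Set.ncard_eq_toFinset_card B hfin]
end

section
/- Let V and E be finite types with maps s, r : E → V, and suppose V has exactly N elements. Let X = {x : ℕ → E | for all n, s(x(n+1)) = r(x(n))} be the path space, and let σ denote the shift, σ(x)(n) = x(n+1). Suppose B ⊆ X satisfies: (i) the rigidity condition, that for all x, y ∈ B and all n ∈ ℕ, r(x(n)) = r(y(n)) implies x(n) = y(n); and (ii) shift-invariance, that σ(x) ∈ B whenever x ∈ B. Then every x ∈ B is periodic: there exists k with 1 ≤ k ≤ N such that x(n+k) = x(n) for all n ∈ ℕ. -/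
/-- Lemma 3.3(2), abstract form: every element of a shift-invariant rigid subset
of the path space of a finite graph is periodic, with period at most `N = |V|`. -/
theorem stmt2 {V E : Type*} [Fintype V] [Fintype E] (s r : E → V) (N : ℕ)
    (hV : Fintype.card V = N)
    (B : Set (ℕ → E))
    (hBX : ∀ x ∈ B, ∀ n : ℕ, s (x (n + 1)) = r (x n))
    (rigid : ∀ x ∈ B, ∀ y ∈ B, ∀ n : ℕ, r (x n) = r (y n) → x n = y n)
    (shiftInv : ∀ x ∈ B, (fun n => x (n + 1)) ∈ B) :
    ∀ x ∈ B, ∃ k : ℕ, 1 ≤ k ∧ k ≤ N ∧ ∀ n : ℕ, x (n + k) = x n := by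
  intro x hx
  -- all shifts of x remain in B
  have hshift : ∀ m : ℕ, (fun n => x (n + m)) ∈ B := by
    intro m
    induction m with
    | zero => simpa using hx
    | succ m ih =>
      have h1 := shiftInv _ ih
      have he : (fun n => x (n + 1 + m)) = (fun n => x (n + (m + 1))) := by
        funext n; congr 1; omega
      rwa [he] at h1
  -- x a is determined by r (x a)
  have K : ∀ a b : ℕ, r (x a) = r (x b) → x a = x b := by
    intro a b h
    have := rigid _ (hshift a) _ (hshift b) 0 (by simpa using h)
    simpa using this
  have hpath : ∀ n, s (x (n + 1)) = r (x n) := hBX x hx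
  -- backward determinism of the vertex sequence
  have back : ∀ a b : ℕ, r (x (a + 1)) = r (x (b + 1)) → r (x a) = r (x b) := by
    intro a b h
    have hx' := K _ _ h
    rw [← hpath a, ← hpath b, hx']
  have backiter : ∀ d a b : ℕ, r (x (a + d)) = r (x (b + d)) → r (x a) = r (x b) := by
    intro d
    induction d with
    | zero => intro a b h; simpa using h
    | succ d ih =>
      intro a b h
      exact ih a b (back (a + d) (b + d) (by
        have e1 : a + d + 1 = a + (d + 1) := by omega
        have e2 : b + d + 1 = b + (d + 1) := by omega
        rw [e1, e2]; exact h))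
  -- for every n there is a period valid up to n
  have claim : ∀ n : ℕ, ∃ k : ℕ, 1 ≤ k ∧ k ≤ N ∧ ∀ m ≤ n, r (x m) = r (x (m + k)) := by
    intro n
    have hlt : Fintype.card V < Fintype.card (Fin (N + 1)) := by simp [hV]
    obtain ⟨t1, t2, hne, heq⟩ :=
      Fintype.exists_ne_map_eq_of_card_lt (fun t : Fin (N + 1) => r (x (n + t))) hlt
    have hnev : (t1 : ℕ) ≠ (t2 : ℕ) := fun h => hne (Fin.ext h)
    set i : ℕ := min (t1 : ℕ) (t2 : ℕ) with hi
    set j : ℕ := max (t1 : ℕ) (t2 : ℕ) with hj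
    have hij : i < j := by omega
    have hveq : r (x (n + i)) = r (x (n + j)) := by
      rcases le_total (t1 : ℕ) (t2 : ℕ) with h | h
      · rw [hi, hj, min_eq_left h, max_eq_right h]; exact heq
      · rw [hi, hj, min_eq_right h, max_eq_left h]; exact heq.symm
    have ht1 := t1.isLt
    have ht2 := t2.isLt
    refine ⟨j - i, by omega, by omega, ?_⟩
    intro m hm
    have hd := backiter (n + i - m) m (m + (j - i)) ?_
    · exact hd
    · have e1 : m + (n + i - m) = n + i := by omega
      have e2 : m + (j - i) + (n + i - m) = n + j := by omega
      rw [e1, e2]; exact hveq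
  -- extract a uniform period via an infinite fiber
  choose g hg1 hg2 hg3 using claim
  set S : Finset ℕ := Finset.Icc 1 N with hS
  have hgS : ∀ n, g n ∈ S := fun n => Finset.mem_Icc.mpr ⟨hg1 n, hg2 n⟩
  have : ∃ k : S, (Set.Infinite ((fun n : ℕ => (⟨g n, hgS n⟩ : S)) ⁻¹' {k})) := by
    obtain ⟨k, hk⟩ := Finite.exists_infinite_fiber (fun n : ℕ => (⟨g n, hgS n⟩ : S))
    exact ⟨k, Set.infinite_coe_iff.mp hk⟩
  obtain ⟨⟨k, hkS⟩, hinf⟩ := this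
  obtain ⟨hk1, hk2⟩ := Finset.mem_Icc.mp hkS
  refine ⟨k, hk1, hk2, ?_⟩
  intro m
  obtain ⟨n, hnmem, hmn⟩ := hinf.exists_gt m
  have hgn : g n = k := by
    have := hnmem
    simp only [Set.mem_preimage, Set.mem_singleton_iff] at this
    exact congrArg Subtype.val this
  have hv := hg3 n m (le_of_lt hmn)
  rw [hgn] at hv
  exact (K m (m + k) hv).symm
end

section
/- Let V and E be finite types with maps s, r : E → V, and suppose V has exactly N elements with N ≥ 1. Let X = {x : ℕ → E | for all n, s(x(n+1)) = r(x(n))} be the path space and σ the shift, σ(x)(n) = x(n+1). Suppose B ⊆ X is shift-invariant and satisfies the rigidity condition: for all x, y ∈ B and all n, r(x(n)) = r(y(n)) implies x(n) = y(n). Let C = {x ∈ X : there exists m ∈ ℕ with σ^m(x) ∈ B}. Then among any N+1 elements of C there are two that are tail-equivalent (x and y are tail-equivalent if there exists m such that x(n) = y(n) for all n ≥ m); in particular, C meets at most N tail-equivalence classes. -/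
/-- Lemma 3.4, combinatorial core: if `B` is a shift-invariant rigid subset of the
path space, then among any `N+1` elements of the path space, some shift of which
lies in `B`, two are tail-equivalent. -/
theorem stmt3 {V E : Type*} [Fintype V] [Fintype E] (s r : E → V) (N : ℕ)
    (hN : 1 ≤ N) (hV : Fintype.card V = N)
    (B : Set (ℕ → E))
    (hBX : ∀ x ∈ B, ∀ n : ℕ, s (x (n + 1)) = r (x n))
    (shiftInv : ∀ x ∈ B, (fun n => x (n + 1)) ∈ B)
    (rigid : ∀ x ∈ B, ∀ y ∈ B, ∀ n : ℕ, r (x n) = r (y n) → x n = y n)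
    (f : Fin (N + 1) → ℕ → E)
    (hfX : ∀ i : Fin (N + 1), ∀ n : ℕ, s (f i (n + 1)) = r (f i n))
    (hfC : ∀ i : Fin (N + 1), ∃ m : ℕ, (fun n => f i (n + m)) ∈ B) :
    ∃ i j : Fin (N + 1), i ≠ j ∧ ∃ m : ℕ, ∀ n ≥ m, f i n = f j n := by
  classical
  -- iterated shift invariance
  have hshift : ∀ x ∈ B, ∀ k : ℕ, (fun n => x (n + k)) ∈ B := by
    intro x hx k
    induction k with
    | zero => simpa using hx
    | succ k ih =>
        have := shiftInv _ ih
        convert this using 2 with n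
        ring_nf
  -- backward propagation of equality from a later r-agreement
  have back : ∀ x ∈ B, ∀ y ∈ B, ∀ n k : ℕ,
      r (x (n + k)) = r (y (n + k)) → x n = y n := by
    intro x hx y hy n k
    induction k with
    | zero => intro h; exact rigid x hx y hy n h
    | succ k ih =>
        intro h
        have hx1 : x (n + k + 1) = y (n + k + 1) := by
          apply rigid x hx y hy
          simpa [Nat.add_assoc] using h
        have hr : r (x (n + k)) = r (y (n + k)) := by
          rw [← hBX x hx (n + k), ← hBX y hy (n + k), hx1]
        exact ih hr
  choose m hm using hfC
  obtain ⟨M, hmM⟩ : ∃ M : ℕ, ∀ i, m i ≤ M :=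
    ⟨Finset.univ.sup m, fun i => Finset.le_sup (Finset.mem_univ i)⟩
  have hxB : ∀ i, (fun n => f i (n + M)) ∈ B := by
    intro i
    have := hshift _ (hm i) (M - m i)
    have heq : (fun n => (fun n' => f i (n' + m i)) (n + (M - m i)))
        = fun n => f i (n + M) := by
      funext n
      show f i (n + (M - m i) + m i) = f i (n + M)
      congr 1
      have := hmM i
      omega
    rwa [heq] at this
  -- pigeonhole at each time t
  have hpig : ∀ t : ℕ, ∃ p : Fin (N + 1) × Fin (N + 1),
      p.1 ≠ p.2 ∧ r (f p.1 (t + M)) = r (f p.2 (t + M)) := by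
    intro t
    have hlt : Fintype.card V < Fintype.card (Fin (N + 1)) := by
      simp [hV]
    obtain ⟨i, j, hij, hr⟩ :=
      Fintype.exists_ne_map_eq_of_card_lt (fun i : Fin (N + 1) => r (f i (t + M))) hlt
    exact ⟨(i, j), hij, hr⟩
  choose g hg1 hg2 using hpig
  -- some pair occurs infinitely often
  obtain ⟨p, hp⟩ := Finite.exists_infinite_fiber g
  have hpinf : (g ⁻¹' {p}).Infinite := by
    rw [← Set.infinite_coe_iff]; exact hp
  obtain ⟨t0, ht0⟩ := hpinf.nonempty
  refine ⟨p.1, p.2, ?_, M, ?_⟩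
  · have := hg1 t0
    rwa [ht0] at this
  · intro n hn
    -- show shifted sequences agree at n - M
    have key : ∀ k : ℕ, f p.1 (k + M) = f p.2 (k + M) := by
      intro k
      obtain ⟨t, ht, htk⟩ := hpinf.exists_gt k
      have hr : r (f p.1 (t + M)) = r (f p.2 (t + M)) := by
        have := hg2 t
        rwa [show g t = p from ht] at this
      have := back _ (hxB p.1) _ (hxB p.2) k (t - k) (by
        simpa [show k + (t - k) = t by omega] using hr)
      simpa using this
    have := key (n - M)
    simpa [show n - M + M = n by omega] using this
end

section
/- Let V and E be finite types with maps s, r : E → V, and let X = {x : ℕ → E | for all n, s(x(n+1)) = r(x(n))} be the path space, topologized as a subspace of the product space E^ℕ where E carries the discrete topology. Assume the directed graph (V, E, r, s) is primitive: there exists N ≥ 1 such that for all p, q ∈ V there exist e_1, …, e_N ∈ E with s(e_1) = p, r(e_N) = q, and s(e_{i+1}) = r(e_i) for 1 ≤ i < N. Then for every x ∈ X, the tail-equivalence class {y ∈ X : there exists m with y(n) = x(n) for all n ≥ m} is dense in X. -/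
/-- The path space of the directed graph `(V, E, r, s)`, as a subspace of the
product space `E^ℕ`. -/
def PathSpace {V E : Type*} (s r : E → V) : Type _ :=
  {x : ℕ → E // ∀ n : ℕ, s (x (n + 1)) = r (x n)}

instance {V E : Type*} [TopologicalSpace E] (s r : E → V) :
    TopologicalSpace (PathSpace s r) :=
  instTopologicalSpaceSubtype

/-- Minimality of the tail (AF) equivalence relation on the path space of a
primitive directed graph: every tail-equivalence class is dense. -/
theorem stmt9 {V E : Type*} [Fintype V] [Fintype E]
    [TopologicalSpace E] [DiscreteTopology E] (s r : E → V) (N : ℕ)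
    (hN : 1 ≤ N)
    (hprim : ∀ p q : V, ∃ e : ℕ → E, s (e 0) = p ∧ r (e (N - 1)) = q ∧
      ∀ i : ℕ, i + 1 < N → s (e (i + 1)) = r (e i)) :
    ∀ x : PathSpace s r,
      Dense {y : PathSpace s r | ∃ m : ℕ, ∀ n ≥ m, y.val n = x.val n} := by
  intro x
  rw [dense_iff_inter_open]
  rintro U hU ⟨⟨z, hz⟩, hzU⟩
  obtain ⟨O, hO, rfl⟩ := isOpen_induced_iff.mp hU
  obtain ⟨I, u, hu, hsub⟩ := isOpen_pi_iff.mp hO z hzU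
  set k : ℕ := I.sup id + 1 with hk
  obtain ⟨e, he0, heN, hestep⟩ := hprim (r (z (k - 1))) (s (x.val (k + N)))
  set y : ℕ → E := fun n => if n < k then z n else if n < k + N then e (n - k) else x.val n
    with hy
  have hyPath : ∀ n, s (y (n + 1)) = r (y n) := by
    intro n
    by_cases h1 : n + 1 < k
    · simp only [hy]
      rw [if_pos h1, if_pos (by omega)]
      exact hz n
    · by_cases h2 : n + 1 = k
      · simp only [hy]
        rw [if_neg (by omega), if_pos (by omega), if_pos (by omega)]
        have e1 : n + 1 - k = 0 := by omega
        have e2 : n = k - 1 := by omega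
        rw [e1, he0, e2]
      · by_cases h3 : n + 1 < k + N
        · simp only [hy]
          rw [if_neg (by omega), if_pos h3, if_neg (by omega), if_pos (by omega)]
          have e1 : n + 1 - k = (n - k) + 1 := by omega
          rw [e1]
          exact hestep (n - k) (by omega)
        · by_cases h4 : n + 1 = k + N
          · simp only [hy]
            rw [if_neg (by omega), if_neg (by omega), if_neg (by omega), if_pos (by omega)]
            have e1 : n - k = N - 1 := by omega
            rw [h4, e1]
            exact heN.symm
          · simp only [hy]
            rw [if_neg (by omega), if_neg (by omega), if_neg (by omega), if_neg (by omega)]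
            exact x.property n
  refine ⟨⟨y, hyPath⟩, ?_, ⟨k + N, fun n hn => ?_⟩⟩
  · apply hsub
    intro i hi
    have hik : i < k := by
      have := Finset.le_sup (f := id) hi
      simpa [hk] using Nat.lt_succ_of_le this
    simp only [hy]
    rw [if_pos hik]
    exact (hu i hi).2
  · simp only [hy]
    rw [if_neg (by omega), if_neg (by omega)]
end

section
/- Let V and E be finite types with maps s, r : E → V, and let X = {x : ℕ → E | for all n, s(x(n+1)) = r(x(n))} be the path space, a subspace of E^ℕ with E discrete. Assume the graph is primitive: there exists N ≥ 1 such that any two vertices are joined by a path of length exactly N. Let C ⊆ E, and for each e ∈ C let h₀^e, h^e : E → Bool, with μ^e defined recursively by μ^e(0)(x) = h₀^e(x(0)) and μ^e(n+1)(x) = μ^e(n)(x) if x(n+1) = e, μ^e(n+1)(x) = h^e(x(n+1)) otherwise. Assume moreover that every e ∈ C satisfies s(e) = r(e), and that for every e ∈ C and every b ∈ Bool there exists f ∈ E with f ≠ e, r(f) = r(e), and h^e(f) = b. Define 𝒳' = {(x,y) ∈ X × X : there exists n with x(m) = y(m) for all m > n and μ^e(n)(x) = μ^e(n)(y) for all e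 ∈ C}. Then for every x ∈ X, the 𝒳'-equivalence class {y ∈ X : (x,y) ∈ 𝒳'} is dense in X. -/
/-!
To approximate a path `z` to depth `k` inside the class of `x`, follow `z` up to time `k`, use
primitivity to reach, at some time `n`, any edge `f` ending at `s (x (n + 1))`, and follow `x`
afterwards. Only `μ^e_{n+1}` needs matching; it can differ only when `x (n + 1) = e ∈ C`, and
then it is `μ^e_n(x)` on one side and `h^e f` on the other, since `f ≠ e`. As `e` is a loop, `f`
can be chosen with `h^e f = μ^e_n(x)`.
-/

/-- The functions `μ^e_n` of Section 4, abstract form. -/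
def mu {E : Type*} [DecidableEq E] (e : E) (h₀ h : E → Bool) :
    ℕ → (ℕ → E) → Bool
  | 0, x => h₀ (x 0)
  | n + 1, x => if x (n + 1) = e then mu e h₀ h n x else h (x (n + 1))

open Filter

section Mu

variable {E : Type*} [DecidableEq E] {e : E} {h₀ h : E → Bool} {x y : ℕ → E} {n : ℕ}

theorem mu_succ_of_ne (hx : x (n + 1) ≠ e) : mu e h₀ h (n + 1) x = h (x (n + 1)) :=
  if_neg hx

theorem mu_succ_congr (hxy : x (n + 1) = y (n + 1))
    (hmu : x (n + 1) = e → mu e h₀ h n x = mu e h₀ h n y) :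
    mu e h₀ h (n + 1) x = mu e h₀ h (n + 1) y := by
  by_cases hx : x (n + 1) = e
  · simp only [mu, if_pos hx, if_pos (hxy ▸ hx), hmu hx]
  · rw [mu_succ_of_ne hx, mu_succ_of_ne (hxy ▸ hx), hxy]

end Mu

section Splice

variable {V E : Type*} (s r : E → V)

def splice (u v : ℕ → E) (k : ℕ) (i : ℕ) : E := if i ≤ k then u i else v i

theorem splice_links {u v : ℕ → E} {a k : ℕ}
    (hu : ∀ i, a ≤ i → i < k → s (u (i + 1)) = r (u i))
    (hk : s (v (k + 1)) = r (u k))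
    (hv : ∀ i, k < i → s (v (i + 1)) = r (v i)) :
    ∀ i, a ≤ i → s (splice u v k (i + 1)) = r (splice u v k i) := by
  intro i hai
  rcases lt_trichotomy i k with hik | rfl | hki
  · simpa [splice, Nat.succ_le_of_lt hik, hik.le] using hu i hai hik
  · simpa [splice] using hk
  · simpa [splice, hki.not_ge, (hki.trans (Nat.lt_succ_self i)).not_ge] using hv i hki

theorem PathSpace.exists_splice {L : ℕ}
    (hconn : ∀ a b : V, ∃ p : ℕ → E, s (p 0) = a ∧ r (p L) = b ∧
      ∀ i < L, s (p (i + 1)) = r (p i))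
    (z x : PathSpace s r) (k : ℕ) (f : E) (hf : r f = s (x.val (k + L + 3))) :
    ∃ y : PathSpace s r, (∀ i ≤ k, y.val i = z.val i) ∧ y.val (k + L + 2) = f ∧
      ∀ i > k + L + 2, y.val i = x.val i := by
  obtain ⟨p, hp0, hpL, hp⟩ := hconn (r (z.val k)) (s f)
  let tail := splice (fun _ => f) x.val (k + L + 2)
  let detour := splice (fun i => p (i - (k + 1))) tail (k + L + 1)
  have htail : ∀ i, k + L + 1 < i → s (tail (i + 1)) = r (tail i) :=
    splice_links s r (by omega) (by simp [hf]) (fun i _ => x.property i)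
  have hdetour : ∀ i, k < i → s (detour (i + 1)) = r (detour i) := by
    refine splice_links s r (a := k + 1) (fun i hi hiL => ?_) ?_ htail
    · simpa [Nat.sub_add_comm hi] using hp (i - (k + 1)) (by omega)
    · simpa [tail, splice, show k + L + 1 - (k + 1) = L by omega] using hpL.symm
  have hy : ∀ i, s (splice z.val detour k (i + 1)) = r (splice z.val detour k i) := fun i =>
    splice_links s r (a := 0) (fun j _ _ => z.property j) (by simpa [detour, splice] using hp0)
      hdetour i i.zero_le
  refine ⟨⟨_, hy⟩, fun i hi => if_pos hi, ?_, fun i hi => ?_⟩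
  · simp [splice, detour, tail, show ¬ k + L + 2 ≤ k by omega]
  · simp [splice, detour, tail, show ¬ i ≤ k by omega, show ¬ i ≤ k + L + 1 by omega,
      show ¬ i ≤ k + L + 2 by omega]

theorem PathSpace.dense_of_forall_exists_eqOn [TopologicalSpace E] {S : Set (PathSpace s r)}
    (hS : ∀ z : PathSpace s r, ∀ k, ∃ y ∈ S, ∀ i ≤ k, y.val i = z.val i) : Dense S := by
  intro z
  choose y hyS hyz using hS z
  refine mem_closure_of_tendsto (f := y) (b := atTop)
    (tendsto_subtype_rng.2 (tendsto_pi_nhds.2 fun i => ?_)) (.of_forall hyS)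
  exact tendsto_const_nhds.congr' (eventually_atTop.2 ⟨i, fun k hk => (hyz k i hk).symm⟩)

end Splice

theorem stmt10_general {V E : Type*} [DecidableEq E] [TopologicalSpace E]
    (s r : E → V) (N : ℕ)
    (hprim : ∀ p q : V, ∃ e : ℕ → E, s (e 0) = p ∧ r (e (N - 1)) = q ∧
      ∀ i : ℕ, i + 1 < N → s (e (i + 1)) = r (e i))
    (C : Set E) (h₀ h : E → E → Bool)
    (hloop : ∀ e ∈ C, s e = r e)
    (hreal : ∀ e ∈ C, ∀ b : Bool, ∃ f : E, f ≠ e ∧ r f = r e ∧ h e f = b) :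
    ∀ x : PathSpace s r,
      Dense {y : PathSpace s r | ∃ n : ℕ, (∀ m > n, x.val m = y.val m) ∧
        ∀ e ∈ C, mu e (h₀ e) (h e) n x.val = mu e (h₀ e) (h e) n y.val} := by
  intro x
  obtain ⟨L, hconn⟩ : ∃ L, ∀ a b : V, ∃ p : ℕ → E, s (p 0) = a ∧ r (p L) = b ∧
      ∀ i < L, s (p (i + 1)) = r (p i) :=
    ⟨N - 1, fun a b => (hprim a b).imp fun p ⟨h0, hL, hp⟩ =>
      ⟨h0, hL, fun i hi => hp i (by omega)⟩⟩
  refine PathSpace.dense_of_forall_exists_eqOn s r fun z k => ?_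
  obtain ⟨f, hfr, hf⟩ : ∃ f, r f = s (x.val (k + L + 3)) ∧ ∀ e ∈ C, x.val (k + L + 3) = e →
      f ≠ e ∧ h e f = mu e (h₀ e) (h e) (k + L + 2) x.val := by
    by_cases hC : x.val (k + L + 3) ∈ C
    · obtain ⟨f, hfa, hfr, hfb⟩ := hreal _ hC (mu _ (h₀ _) (h _) (k + L + 2) x.val)
      refine ⟨f, hfr.trans (hloop _ hC).symm, ?_⟩
      rintro e - rfl
      exact ⟨hfa, hfb⟩
    · exact ⟨x.val (k + L + 2), (x.property _).symm, fun e he hxe => absurd (hxe ▸ he) hC⟩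
  obtain ⟨y, hyz, hyf, hyx⟩ := PathSpace.exists_splice s r hconn z x k f hfr
  refine ⟨y, ⟨k + L + 3, fun m hm => (hyx m (by omega)).symm, fun e he => ?_⟩, hyz⟩
  refine mu_succ_congr (hyx _ (by omega)).symm fun hxe => ?_
  obtain ⟨hfe, hfb⟩ := hf e he hxe
  have hyf' : y.val (k + L + 1 + 1) = f := hyf
  rw [← hfb, ← hyf']
  exact (mu_succ_of_ne (by rwa [hyf'])).symm

/-- Lemma 4.3, abstract form: the AF subequivalence relation
`𝒳' = ⋃ₙ 𝒳'_n` on the path space of a primitive graph is minimal, i.e. every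
`𝒳'`-equivalence class is dense. -/
theorem stmt10 {V E : Type*} [Fintype V] [Fintype E] [DecidableEq E]
    [TopologicalSpace E] [DiscreteTopology E]
    (s r : E → V) (N : ℕ) (hN : 1 ≤ N)
    (hprim : ∀ p q : V, ∃ e : ℕ → E, s (e 0) = p ∧ r (e (N - 1)) = q ∧
      ∀ i : ℕ, i + 1 < N → s (e (i + 1)) = r (e i))
    (C : Set E) (h₀ h : E → E → Bool)
    (hloop : ∀ e ∈ C, s e = r e)
    (hreal : ∀ e ∈ C, ∀ b : Bool, ∃ f : E, f ≠ e ∧ r f = r e ∧ h e f = b) :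
    ∀ x : PathSpace s r,
      Dense {y : PathSpace s r | ∃ n : ℕ, (∀ m > n, x.val m = y.val m) ∧
        ∀ e ∈ C, mu e (h₀ e) (h e) n x.val = mu e (h₀ e) (h e) n y.val} :=
  stmt10_general s r N hprim C h₀ h hloop hreal
end

section
/- Let V and E be finite types with maps s, r : E → V, and let X = {x : ℕ → E | for all n, s(x(n+1)) = r(x(n))} be the path space. Let C ⊆ E, and for each e ∈ C let h₀^e, h^e : E → Bool, with μ^e defined recursively by μ^e(0)(x) = h₀^e(x(0)) and μ^e(n+1)(x) = μ^e(n)(x) if x(n+1) = e, μ^e(n+1)(x) = h^e(x(n+1)) otherwise. Let x, y ∈ X be tail-equivalent: there exists m with x(n) = y(n) for all n > m. Assume that for every e ∈ C and every l ∈ ℕ there exists n > l with x(n) ≠ e. Then there exists n ∈ ℕ such that x(i) = y(i) for all i > n and μ^e(n)(x) = μ^e(n)(y) for all e ∈ C. -/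
lemma mu_eq_of_reset {E : Type*} [DecidableEq E] (e : E) (h₀ h : E → Bool)
    (x y : ℕ → E) (m : ℕ) (htail : ∀ n > m, x n = y n) :
    ∀ n : ℕ, (∃ k, m < k ∧ k ≤ n ∧ x k ≠ e) →
      mu e h₀ h n x = mu e h₀ h n y := by
  intro n
  induction n with
  | zero => rintro ⟨k, hk1, hk2, _⟩; omega
  | succ n ih =>
    rintro ⟨k, hk1, hk2, hk3⟩
    have hyx : y (n + 1) = x (n + 1) := (htail (n + 1) (by omega)).symm
    by_cases hxe : x (n + 1) = e
    · have hk : k ≤ n := by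
        rcases Nat.lt_succ_iff_lt_or_eq.mp (Nat.lt_succ_of_le hk2) with h' | h'
        · omega
        · exact absurd (h' ▸ hxe) hk3
      simp [mu, hxe, hyx, ih ⟨k, hk1, hk, hk3⟩]
    · simp [mu, hxe, hyx]

/-- Lemma 4.2, abstract form: if `x` and `y` are tail-equivalent and, for every
`e ∈ C`, `x` is not eventually constant equal to `e`, then `x` and `y` are
equivalent under the smaller relation `𝒳'`. -/
theorem stmt12 {V E : Type*} [Fintype V] [Fintype E] [DecidableEq E]
    (s r : E → V) (C : Set E) (h₀ h : E → E → Bool)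
    (x y : ℕ → E)
    (hx : ∀ n : ℕ, s (x (n + 1)) = r (x n))
    (hy : ∀ n : ℕ, s (y (n + 1)) = r (y n))
    (m : ℕ) (htail : ∀ n > m, x n = y n)
    (hnotIII : ∀ e ∈ C, ∀ l : ℕ, ∃ n > l, x n ≠ e) :
    ∃ n : ℕ, (∀ i > n, x i = y i) ∧
      ∀ e ∈ C, mu e (h₀ e) (h e) n x = mu e (h₀ e) (h e) n y := by
  classical
  set f : E → ℕ := fun e => if he : e ∈ C then (hnotIII e he m).choose else 0 with hf
  have hfspec : ∀ e ∈ C, f e > m ∧ x (f e) ≠ e := by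
    intro e he
    have := (hnotIII e he m).choose_spec
    simp only [hf, dif_pos he]
    exact ⟨this.1, this.2⟩
  refine ⟨max m (Finset.univ.sup f), ?_, ?_⟩
  · intro i hi
    exact htail i (lt_of_le_of_lt (le_max_left _ _) hi)
  · intro e he
    refine mu_eq_of_reset e (h₀ e) (h e) x y m htail _ ⟨f e, (hfspec e he).1, ?_, (hfspec e he).2⟩
    exact le_max_of_le_right (Finset.le_sup (Finset.mem_univ e))
end

section
/- Let E and F be finite types, T a type, θ : F → T a function, and A : E → Set (F × F). Assume: (i) for every e ∈ E and every (a, b) ∈ A(e), θ(b) = θ(a); and (ii) for every e ∈ E and all (a, b), (a', b') ∈ A(e), if θ(a) = θ(a') then a = a' and b = b'. For t ∈ T define B_t = {x : ℕ → E | there exists a : ℕ → F with θ(a(0)) = t and (a(n), a(n+1)) ∈ A(x(n)) for all n}. Let t ∈ T, m ∈ ℕ, and let y, z, w : ℕ → E satisfy: y ∈ B_t, z ∈ B_t, z(n) = w(n) for all n > m, and w(i) = y(i) for all i ≤ m+1. Then w ∈ B_t. -/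
/-- Key splicing step in the proof of Proposition 2.1 (étaleness of `B_t`):
borders have constant direction and can be spliced at a common coordinate. -/
theorem stmt13 {E F T : Type*} [Fintype E] [Fintype F]
    (θ : F → T) (A : E → Set (F × F))
    (hdir : ∀ e : E, ∀ p ∈ A e, θ p.2 = θ p.1)
    (huniq : ∀ e : E, ∀ p ∈ A e, ∀ q ∈ A e, θ p.1 = θ q.1 → p.1 = q.1 ∧ p.2 = q.2)
    (t : T) (m : ℕ) (y z w : ℕ → E)
    (hy : y ∈ {x : ℕ → E | ∃ a : ℕ → F, θ (a 0) = t ∧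
      ∀ n : ℕ, (a n, a (n + 1)) ∈ A (x n)})
    (hz : z ∈ {x : ℕ → E | ∃ a : ℕ → F, θ (a 0) = t ∧
      ∀ n : ℕ, (a n, a (n + 1)) ∈ A (x n)})
    (hzw : ∀ n > m, z n = w n)
    (hwy : ∀ i ≤ m + 1, w i = y i) :
    w ∈ {x : ℕ → E | ∃ a : ℕ → F, θ (a 0) = t ∧
      ∀ n : ℕ, (a n, a (n + 1)) ∈ A (x n)} := by
  obtain ⟨a, ha0, ha⟩ := hy
  obtain ⟨b, hb0, hb⟩ := hz
  have hat : ∀ n, θ (a n) = t := by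
    intro n; induction n with
    | zero => exact ha0
    | succ k ih => rw [← ih]; exact hdir (y k) _ (ha k)
  have hbt : ∀ n, θ (b n) = t := by
    intro n; induction n with
    | zero => exact hb0
    | succ k ih => rw [← ih]; exact hdir (z k) _ (hb k)
  have hyz : y (m + 1) = z (m + 1) := by
    rw [← hwy (m + 1) le_rfl, hzw (m + 1) (Nat.lt_succ_self m)]
  have hab : a (m + 1) = b (m + 1) := by
    have h := huniq (y (m + 1)) _ (ha (m + 1)) _ (hyz ▸ hb (m + 1))
      (by rw [hat, hbt])
    exact h.1
  refine ⟨fun n => if n ≤ m + 1 then a n else b n, by simp [ha0], fun n => ?_⟩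
  rcases lt_trichotomy n (m + 1) with h | h | h
  · have h1 : n ≤ m + 1 := le_of_lt h
    have h2 : n + 1 ≤ m + 1 := h
    simp only [if_pos h1, if_pos h2]
    rw [hwy n h1]; exact ha n
  · subst h
    simp only [le_rfl, if_pos, if_neg (by omega : ¬ m + 1 + 1 ≤ m + 1)]
    rw [hab, ← hzw (m + 1) (Nat.lt_succ_self m)]
    exact hb (m + 1)
  · simp only [if_neg (by omega : ¬ n ≤ m + 1), if_neg (by omega : ¬ n + 1 ≤ m + 1)]
    rw [← hzw n (by omega)]
    exact hb n
end
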